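/- Fix i ≥ 1 and assume that every component of G''^{(i)} is entered by O(log n · log log n) flows in total. Then every node v not contained in a directed cycle of G''^{(i)} receives a load of at most T_i(v) = O(log n · log log n), and, with probability at least 1 − O(n^{−2}), every node contained in a directed cycle of G''^{(i)} receives a load of at most T_i(v) = O(log² n · log log n) before the flows exit G''^{(i)}. -/

import Mathlib

/-!
STATEMENT 10 (Lemma 9, load of `G''⁽ⁱ⁾`).

Nodes follow the 3-Permutations protocol (threshold `C₁ = Θ(log n)`, three
independent uniformly random orderings of `V \ {d}` per node); the adversary fails
destination edges (`≤ ε·n`) and inner edges (`≤ γ·n`), `ε + γ ≤ α < 1` constants.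
For each phase `i`, `G''⁽ⁱ⁾` is the functional digraph in which every bad node
points to the first alive node of its `i`-th ordering; a flow *enters* `G''⁽ⁱ⁾` at
its position at hop `(i-1)·C₁` (provided it has not yet arrived) and exits at hop
`i·C₁`; `T_i(v)` is the load accumulated at `v` by packets with hop counter in
`[(i-1)C₁, iC₁)`.

Claim: fix `i ≥ 1` and assume every component of `G''⁽ⁱ⁾` is entered by at most
`O(log n · log log n)` flows in total.  Then every node `v` not on a directed cycle
of `G''⁽ⁱ⁾` receives load `T_i(v) = O(log n · log log n)`, and with probability at
least `1 − O(n⁻²)` every node on a directed cycle of `G''⁽ⁱ⁾` receives load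
`T_i(v) = O(log² n · log log n)`.
-/

open scoped Classical
open Finset

noncomputable section

/-- `lg` denotes the base-2 logarithm (the paper's `log`). -/
def lg (x : ℝ) : ℝ := Real.logb 2 x

abbrev NodeOrder (n : ℕ) (d : Fin n) : Type := Fin (n - 1) ≃ {v : Fin n // v ≠ d}

def unifProb {Ω : Type*} [Fintype Ω] (P : Ω → Prop) : ℝ :=
  ((Finset.univ : Finset Ω).filter P).card / (Fintype.card Ω : ℝ)

def firstAlive {n : ℕ} {d : Fin n} (F : Finset (Sym2 (Fin n)))
    (π : NodeOrder n d) (v : Fin n) : Fin n :=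
  if h : (Finset.univ.filter fun j : Fin (n - 1) => s(v, (π j).1) ∉ F).Nonempty then
    (π ((Finset.univ.filter fun j : Fin (n - 1) => s(v, (π j).1) ∉ F).min' h)).1
  else v

/-- Which of the three permutations is used at hop counter `t`. -/
def permIndex (C1 t : ℕ) : Fin 3 := if t < C1 then 0 else if t < 2 * C1 then 1 else 2

/-- The permutation index used during phase `i ≥ 1` (`i = 1,2,3,…`). -/
def phase (i : ℕ) : Fin 3 := if i ≤ 1 then 0 else if i = 2 then 1 else 2

def route {n : ℕ} (d : Fin n) (F : Finset (Sym2 (Fin n)))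
    (ω : Fin n → Fin 3 → NodeOrder n d) (C1 : ℕ) (s : Fin n) : ℕ → Fin n
  | 0 => s
  | t + 1 =>
      let v := route d F ω C1 s t
      if v = d then d
      else if s(v, d) ∉ F then d
      else firstAlive F (ω v (permIndex C1 t)) v

def badNodes {n : ℕ} (d : Fin n) (F : Finset (Sym2 (Fin n))) : Finset (Fin n) :=
  (Finset.univ.erase d).filter fun v => s(v, d) ∈ F

/-- Successor map of `G''⁽ⁱ⁾`. -/
def succPhase {n : ℕ} (d : Fin n) (F : Finset (Sym2 (Fin n)))
    (ω : Fin n → Fin 3 → NodeOrder n d) (i : ℕ) (v : Fin n) : Fin n :=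
  if v ∈ badNodes d F then firstAlive F (ω v (phase i)) v else v

/-- The undirected (weak-connectivity) graph underlying a functional digraph. -/
def compGraph {n : ℕ} (VB : Finset (Fin n)) (f : Fin n → Fin n) :
    SimpleGraph (Fin n) where
  Adj u v := u ≠ v ∧ ((u ∈ VB ∧ f u = v) ∨ (v ∈ VB ∧ f v = u))
  symm := ⟨fun _ _ h => ⟨h.1.symm, h.2.elim Or.inr Or.inl⟩⟩
  loopless := ⟨fun _ h => h.1 rfl⟩

/-- `v` lies on a directed cycle. -/
def onCycle {n : ℕ} (VB : Finset (Fin n)) (f : Fin n → Fin n) (v : Fin n) : Prop :=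
  v ∈ VB ∧ ∃ k : ℕ, 0 < k ∧ f^[k] v = v

/-- `T_i(v)`: the load accumulated at `v` by packets whose hop counter lies in
`[(i-1)·C₁, i·C₁)`. -/
def Tload {n : ℕ} (d : Fin n) (F : Finset (Sym2 (Fin n)))
    (ω : Fin n → Fin 3 → NodeOrder n d) (C1 i : ℕ) (v : Fin n) : ℕ :=
  ∑ s ∈ Finset.univ.erase d,
    ((Finset.Ico ((i - 1) * C1) (i * C1)).filter fun t =>
      route d F ω C1 s t = v).card

/-- The number of flows entering the component (of `G''⁽ⁱ⁾`) of `v`. -/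
def flowsEntering {n : ℕ} (d : Fin n) (F : Finset (Sym2 (Fin n)))
    (ω : Fin n → Fin 3 → NodeOrder n d) (C1 i : ℕ) (v : Fin n) : ℕ :=
  ((Finset.univ.erase d).filter fun s =>
    route d F ω C1 s ((i - 1) * C1) ≠ d ∧
    (compGraph (badNodes d F) (succPhase d F ω i)).Reachable
      (route d F ω C1 s ((i - 1) * C1)) v).card

/-!
Inside the window `[(i-1)·C₁, i·C₁)` a packet that has not yet arrived moves along `G''⁽ⁱ⁾`,
so it stays in the component it entered, and if it visits a node twice that node lies on a
directed cycle. Hence each entering flow contributes at most one visit to a node off the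
cycles and at most `C₁ = O(log n)` visits to a cycle node, while flows that never enter the
component of `v` contribute nothing. Both bounds hold for every choice of the permutations,
so the probability bound is trivial.
-/

instance (n : ℕ) (d : Fin n) : Nonempty (NodeOrder n d) :=
  ⟨Fintype.equivOfCardEq (by simp [Fintype.card_subtype_compl])⟩

lemma unifProb_eq_one {Ω : Type*} [Fintype Ω] [Nonempty Ω] {P : Ω → Prop}
    (h : ∀ ω, P ω) : unifProb P = 1 := by
  rw [unifProb, Finset.filter_true_of_mem (fun ω _ => h ω), Finset.card_univ, div_self]
  exact_mod_cast Fintype.card_ne_zero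

lemma one_le_lg {x : ℝ} (hx : 2 ≤ x) : 1 ≤ lg x := by
  rw [lg, Real.le_logb_iff_rpow_le one_lt_two (by linarith)]
  simpa using hx

lemma card_Ico_phase {i : ℕ} (hi : 1 ≤ i) (C1 : ℕ) :
    (Ico ((i - 1) * C1) (i * C1)).card = C1 := by
  rw [Nat.card_Ico, ← Nat.sub_mul, Nat.sub_sub_self hi, one_mul]

lemma permIndex_eq_phase {C1 i t : ℕ} (hi : 1 ≤ i) (h1 : (i - 1) * C1 ≤ t)
    (h2 : t < i * C1) : permIndex C1 t = phase i := by
  unfold permIndex phase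
  match i, hi with
  | 1, _ => simp_all
  | 2, _ => simp_all
  | m + 3, _ =>
    have : 2 * C1 ≤ (m + 3 - 1) * C1 := Nat.mul_le_mul_right C1 (by omega)
    simp [show ¬ t < C1 by omega, show ¬ t < 2 * C1 by omega]

section CompGraph

variable {n : ℕ} {VB : Finset (Fin n)} {f : Fin n → Fin n}

lemma compGraph_reachable_apply {u : Fin n} (hu : u ∈ VB) :
    (compGraph VB f).Reachable u (f u) := by
  by_cases h : u = f u
  · rw [← h]
  · exact SimpleGraph.Adj.reachable ⟨h, Or.inl ⟨hu, rfl⟩⟩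

lemma compGraph_reachable_iterate {u : Fin n} {k : ℕ} (h : ∀ j < k, f^[j] u ∈ VB) :
    (compGraph VB f).Reachable u (f^[k] u) := by
  induction k with
  | zero => rfl
  | succ k ih =>
    rw [Function.iterate_succ_apply']
    exact (ih fun j hj => h j (by omega)).trans (compGraph_reachable_apply (h k k.lt_succ_self))

end CompGraph

section Route

variable {n : ℕ} (d : Fin n) (F : Finset (Sym2 (Fin n)))
  (ω : Fin n → Fin 3 → NodeOrder n d) (C1 : ℕ) {i : ℕ} (s : Fin n)

lemma route_eq_dest_of_le {t t' : ℕ} (h : t ≤ t') (hd : route d F ω C1 s t = d) :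
    route d F ω C1 s t' = d := by
  induction t', h using Nat.le_induction with
  | base => exact hd
  | succ t' _ ih => simp [route, ih]

lemma route_succ_eq_succPhase (hi : 1 ≤ i) {t : ℕ} (h1 : (i - 1) * C1 ≤ t)
    (h2 : t < i * C1) (hne : route d F ω C1 s (t + 1) ≠ d) :
    route d F ω C1 s t ∈ badNodes d F ∧
      route d F ω C1 s (t + 1) = succPhase d F ω i (route d F ω C1 s t) := by
  have hd : route d F ω C1 s t ≠ d := fun hd => hne (by simp [route, hd])
  have hF : s(route d F ω C1 s t, d) ∈ F := by
    by_contra hF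
    exact hne (by simp [route, hd, hF])
  have hbad : route d F ω C1 s t ∈ badNodes d F := by simp [badNodes, hd, hF]
  refine ⟨hbad, ?_⟩
  simp only [route, if_neg hd, hF, not_true_eq_false, if_false]
  rw [permIndex_eq_phase hi h1 h2, succPhase, if_pos hbad]

lemma route_add_eq_iterate (hi : 1 ≤ i) {t k : ℕ} (h1 : (i - 1) * C1 ≤ t)
    (h2 : t + k ≤ i * C1) (hne : route d F ω C1 s (t + k) ≠ d) :
    (∀ j < k, (succPhase d F ω i)^[j] (route d F ω C1 s t) ∈ badNodes d F) ∧
      route d F ω C1 s (t + k) = (succPhase d F ω i)^[k] (route d F ω C1 s t) := by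
  induction k with
  | zero => simp
  | succ k ih =>
    obtain ⟨hbad, hstep⟩ := route_succ_eq_succPhase d F ω C1 s hi (t := t + k) (by omega)
      (by omega) hne
    obtain ⟨ihbad, ihk⟩ := ih (by omega) fun hd =>
      hne (route_eq_dest_of_le d F ω C1 s (Nat.le_succ _) hd)
    refine ⟨fun j hj => ?_, by rw [← add_assoc, hstep, ihk, Function.iterate_succ_apply']⟩
    rcases Nat.lt_succ_iff_lt_or_eq.mp hj with hj | rfl
    · exact ihbad j hj
    · rwa [← ihk]

lemma reachable_route (hi : 1 ≤ i) {t : ℕ} (h1 : (i - 1) * C1 ≤ t) (h2 : t ≤ i * C1)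
    (hne : route d F ω C1 s t ≠ d) :
    (compGraph (badNodes d F) (succPhase d F ω i)).Reachable
      (route d F ω C1 s ((i - 1) * C1)) (route d F ω C1 s t) := by
  obtain ⟨k, rfl⟩ := Nat.exists_eq_add_of_le h1
  obtain ⟨hbad, hk⟩ := route_add_eq_iterate d F ω C1 s hi le_rfl h2 hne
  rw [hk]
  exact compGraph_reachable_iterate hbad

lemma onCycle_route (hi : 1 ≤ i) {t₁ t₂ : ℕ} (h1 : (i - 1) * C1 ≤ t₁) (hlt : t₁ < t₂)
    (h2 : t₂ ≤ i * C1) (heq : route d F ω C1 s t₁ = route d F ω C1 s t₂)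
    (hne : route d F ω C1 s t₂ ≠ d) :
    onCycle (badNodes d F) (succPhase d F ω i) (route d F ω C1 s t₁) := by
  obtain ⟨k, rfl⟩ := Nat.exists_eq_add_of_lt hlt
  obtain ⟨hbad, hk⟩ := route_add_eq_iterate d F ω C1 s hi (k := k + 1) h1 h2 hne
  exact ⟨hbad 0 (by omega), k + 1, by omega, hk.symm.trans heq.symm⟩

lemma card_visits_le_one (hi : 1 ≤ i) {v : Fin n} (hv : v ≠ d)
    (hcyc : ¬ onCycle (badNodes d F) (succPhase d F ω i) v) :
    ((Ico ((i - 1) * C1) (i * C1)).filter fun t => route d F ω C1 s t = v).card ≤ 1 := by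
  refine Finset.card_le_one.mpr fun t₁ ht₁ t₂ ht₂ => ?_
  simp only [mem_filter, mem_Ico] at ht₁ ht₂
  by_contra hne
  rcases Nat.lt_or_gt_of_ne hne with hlt | hlt
  · exact hcyc (ht₁.2 ▸ onCycle_route d F ω C1 s hi ht₁.1.1 hlt ht₂.1.2.le
      (ht₁.2.trans ht₂.2.symm) (ht₂.2 ▸ hv))
  · exact hcyc (ht₂.2 ▸ onCycle_route d F ω C1 s hi ht₂.1.1 hlt ht₁.1.2.le
      (ht₂.2.trans ht₁.2.symm) (ht₁.2 ▸ hv))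

lemma Tload_le_mul_flowsEntering (hi : 1 ≤ i) {v : Fin n} (hv : v ≠ d) {m : ℕ}
    (hm : ∀ s, ((Ico ((i - 1) * C1) (i * C1)).filter
      fun t => route d F ω C1 s t = v).card ≤ m) :
    Tload d F ω C1 i v ≤ m * flowsEntering d F ω C1 i v := by
  rw [Tload, flowsEntering, card_filter, mul_sum]
  refine sum_le_sum fun s _ => ?_
  rcases Finset.eq_empty_or_nonempty
    ((Ico ((i - 1) * C1) (i * C1)).filter fun t => route d F ω C1 s t = v) with he | ⟨t, ht⟩
  · simp [he]
  · simp only [mem_filter, mem_Ico] at ht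
    obtain ⟨⟨h1, h2⟩, rfl⟩ := ht
    have hstart : route d F ω C1 s ((i - 1) * C1) ≠ d := fun hd =>
      hv (route_eq_dest_of_le d F ω C1 s h1 hd)
    rw [if_pos ⟨hstart, reachable_route d F ω C1 s hi h1 h2.le hv⟩, mul_one]
    exact hm s

end Route

theorem Gpp_phase_load_general (ε γ : ℝ) (A : ℝ) (hA : 0 < A) :
    ∃ (c₁ A' B' D : ℝ) (N : ℕ), 0 < c₁ ∧ 0 < A' ∧ 0 < B' ∧ 0 < D ∧
      ∀ n : ℕ, N ≤ n →
        ∀ (d : Fin n) (F : Finset (Sym2 (Fin n))),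
          (∀ e ∈ F, ¬ e.IsDiag) →
          ((F.filter fun e => d ∈ e).card : ℝ) ≤ ε * n →
          ((F.filter fun e => d ∉ e).card : ℝ) ≤ γ * n →
          ∀ i : ℕ, 1 ≤ i →
            1 - D / (n : ℝ) ^ 2 ≤
              unifProb (fun ω : Fin n → Fin 3 → NodeOrder n d =>
                -- assumption: every component of `G''⁽ⁱ⁾` is entered by at most
                -- `O(log n log log n)` flows
                (∀ v : Fin n, v ≠ d →
                    (flowsEntering d F ω ⌈c₁ * lg n⌉₊ i v : ℝ)
                      ≤ A * lg n * lg (lg n)) →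
                -- conclusion 1: nodes not on a cycle get `O(log n log log n)` load
                (∀ v : Fin n, v ≠ d →
                    ¬ onCycle (badNodes d F) (succPhase d F ω i) v →
                    (Tload d F ω ⌈c₁ * lg n⌉₊ i v : ℝ) ≤ A' * lg n * lg (lg n)) ∧
                -- conclusion 2: cycle nodes get `O(log² n log log n)` load
                (∀ v : Fin n, v ≠ d →
                    onCycle (badNodes d F) (succPhase d F ω i) v →
                    (Tload d F ω ⌈c₁ * lg n⌉₊ i v : ℝ)
                      ≤ B' * lg n ^ 2 * lg (lg n))) := by
  refine ⟨1, A, 2 * A, 1, 2, one_pos, hA, by positivity, one_pos, ?_⟩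
  intro n hn d F _ _ _ i hi
  simp only [one_mul]
  have hlg : 1 ≤ lg n := one_le_lg (by exact_mod_cast hn)
  have hC1 : (⌈lg n⌉₊ : ℝ) ≤ 2 * lg n := Nat.ceil_le_two_mul (by linarith)
  set C1 := ⌈lg n⌉₊
  refine (sub_le_self _ (by positivity)).trans
    (unifProb_eq_one fun ω hflows => ⟨fun v hv hcyc => ?_, fun v hv _ => ?_⟩).ge
  · have hT := Tload_le_mul_flowsEntering d F ω C1 hi hv fun s =>
      card_visits_le_one d F ω C1 s hi hv hcyc
    calc (Tload d F ω C1 i v : ℝ) ≤ flowsEntering d F ω C1 i v := by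
          exact_mod_cast hT.trans (one_mul _).le
      _ ≤ A * lg n * lg (lg n) := hflows v hv
  · have hT := Tload_le_mul_flowsEntering d F ω C1 hi hv fun s =>
      (card_filter_le _ _).trans (card_Ico_phase hi C1).le
    have hlglg : 0 ≤ lg (lg n) := Real.logb_nonneg one_lt_two hlg
    calc (Tload d F ω C1 i v : ℝ)
        ≤ C1 * flowsEntering d F ω C1 i v := by exact_mod_cast hT
      _ ≤ (2 * lg n) * (A * lg n * lg (lg n)) :=
          mul_le_mul hC1 (hflows v hv) (Nat.cast_nonneg _) (by linarith)
      _ = 2 * A * lg n ^ 2 * lg (lg n) := by ring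

theorem Gpp_phase_load (ε γ α : ℝ) (hε : 0 < ε) (hγ : 0 < γ)
    (hεγ : ε + γ ≤ α) (hα : α < 1) (A : ℝ) (hA : 0 < A) :
    ∃ (c₁ A' B' D : ℝ) (N : ℕ), 0 < c₁ ∧ 0 < A' ∧ 0 < B' ∧ 0 < D ∧
      ∀ n : ℕ, N ≤ n →
        ∀ (d : Fin n) (F : Finset (Sym2 (Fin n))),
          (∀ e ∈ F, ¬ e.IsDiag) →
          ((F.filter fun e => d ∈ e).card : ℝ) ≤ ε * n →
          ((F.filter fun e => d ∉ e).card : ℝ) ≤ γ * n →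
          ∀ i : ℕ, 1 ≤ i →
            1 - D / (n : ℝ) ^ 2 ≤
              unifProb (fun ω : Fin n → Fin 3 → NodeOrder n d =>
                -- assumption: every component of `G''⁽ⁱ⁾` is entered by at most
                -- `O(log n log log n)` flows
                (∀ v : Fin n, v ≠ d →
                    (flowsEntering d F ω ⌈c₁ * lg n⌉₊ i v : ℝ)
                      ≤ A * lg n * lg (lg n)) →
                -- conclusion 1: nodes not on a cycle get `O(log n log log n)` load
                (∀ v : Fin n, v ≠ d →
                    ¬ onCycle (badNodes d F) (succPhase d F ω i) v →
                    (Tload d F ω ⌈c₁ * lg n⌉₊ i v : ℝ) ≤ A' * lg n * lg (lg n)) ∧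
                -- conclusion 2: cycle nodes get `O(log² n log log n)` load
                (∀ v : Fin n, v ≠ d →
                    onCycle (badNodes d F) (succPhase d F ω i) v →
                    (Tload d F ω ⌈c₁ * lg n⌉₊ i v : ℝ)
                      ≤ B' * lg n ^ 2 * lg (lg n))) :=
  Gpp_phase_load_general ε γ A hA
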